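/- Set V = P^D_{𝒯^{⊥_D}} Z. Then VᵀDV is invertible and Bᵀ P^D_ℋ D⁻¹ C Z°⁻ᵀ = BᵀV(VᵀDV)⁻¹; i.e. the γθ-block of the asymptotic covariance matrix Σ_λ̂ has this representation. -/

import Mathlib

open Matrix BigOperators

noncomputable section

/-- Cells `(j,k)` of a `(J+1) × (K+1)` contingency table. -/
abbrev Cell (J K : ℕ) := Fin (J + 1) × Fin (K + 1)

/-- Standard unit vector `e_{jk}` in `ℝ^I`. -/
def eV {J K : ℕ} (c : Cell J K) : Cell J K → ℝ := Pi.single c 1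

/-- Row-sum vector `e_{j+} = Σ_k e_{jk}`. -/
def eRow {J K : ℕ} (j : Fin (J + 1)) : Cell J K → ℝ := ∑ k : Fin (K + 1), eV (j, k)

/-- Column-sum vector `e_{+k} = Σ_j e_{jk}`. -/
def eCol {J K : ℕ} (k : Fin (K + 1)) : Cell J K → ℝ := ∑ j : Fin (J + 1), eV (j, k)

/-- The all-ones vector `e_{++}`. -/
def eAll (J K : ℕ) : Cell J K → ℝ := ∑ j : Fin (J + 1), ∑ k : Fin (K + 1), eV (j, k)

/-- The row space `ℛ = span{e_{0+},…,e_{J+}}`. -/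
def rowSpace (J K : ℕ) : Submodule ℝ (Cell J K → ℝ) :=
  Submodule.span ℝ (Set.range (eRow (J := J) (K := K)))

/-- The column space `𝒞 = span{e_{+0},…,e_{+K}}`. -/
def colSpace (J K : ℕ) : Submodule ℝ (Cell J K → ℝ) :=
  Submodule.span ℝ (Set.range (eCol (J := J) (K := K)))

/-- The diagonal space `𝒟 = span{e_{++}}`. -/
def diagSpace (J K : ℕ) : Submodule ℝ (Cell J K → ℝ) :=
  Submodule.span ℝ {eAll J K}

/-- The marginal space `𝒯 = ℛ + 𝒞`. -/
def margSpace (J K : ℕ) : Submodule ℝ (Cell J K → ℝ) := rowSpace J K ⊔ colSpace J K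

/-- `P` is the `D`-orthogonal projection matrix onto the subspace `S`:
`P x ∈ S` and `x - P x` is `D`-orthogonal to `S`, for every `x`. -/
def IsProjD {J K : ℕ} (D : Matrix (Cell J K) (Cell J K) ℝ) (S : Submodule ℝ (Cell J K → ℝ))
    (P : Matrix (Cell J K) (Cell J K) ℝ) : Prop :=
  ∀ x, P.mulVec x ∈ S ∧ ∀ s ∈ S, (x - P.mulVec x) ⬝ᵥ D.mulVec s = 0

/-- The `D`-orthogonal complement of a subspace `S`. -/
def perpD {J K : ℕ} (D : Matrix (Cell J K) (Cell J K) ℝ) (S : Submodule ℝ (Cell J K → ℝ)) :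
    Submodule ℝ (Cell J K → ℝ) where
  carrier := {x | ∀ t ∈ S, x ⬝ᵥ D.mulVec t = 0}
  add_mem' := by
    intro a b ha hb t ht
    simp only [Set.mem_setOf_eq] at *
    simp [add_dotProduct, ha t ht, hb t ht]
  zero_mem' := by
    intro t ht
    simp
  smul_mem' := by
    intro c a ha t ht
    simp only [Set.mem_setOf_eq] at *
    simp [smul_dotProduct, ha t ht]

/-- The vector `c_{jk} = e_{jk} + e_{00} - e_{j0} - e_{0k}` (for `1 ≤ j`, `1 ≤ k`). -/
def cVec {J K : ℕ} (j : Fin J) (k : Fin K) : Cell J K → ℝ :=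
  eV (j.succ, k.succ) + eV (0, 0) - eV (j.succ, 0) - eV (0, k.succ)

/-- The `I × (JK)` matrix `C` with columns `c_{jk}`. -/
def Cmat (J K : ℕ) : Matrix (Cell J K) (Fin J × Fin K) ℝ :=
  fun i jk => cVec jk.1 jk.2 i

/-- The vector `b_k = e_{0k} - e_{00}` (for `1 ≤ k`). -/
def bVec {J K : ℕ} (k : Fin K) : Cell J K → ℝ :=
  eV ((0 : Fin (J + 1)), k.succ) - eV (0, 0)

/-- The `I × K` matrix `B` with columns `b_k`. -/
def Bmat (J K : ℕ) : Matrix (Cell J K) (Fin K) ℝ :=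
  fun i k => bVec k i

/-- The `I × K` matrix `E` with columns `e_{+1},…,e_{+K}`. -/
def Emat (J K : ℕ) : Matrix (Cell J K) (Fin K) ℝ :=
  fun i k => eCol k.succ i

/-- Column space of a matrix. -/
def colSpan {m n : Type*} [Fintype n] (A : Matrix m n ℝ) : Submodule ℝ (m → ℝ) :=
  Submodule.span ℝ (Set.range fun j => fun i => A i j)

/-- The reduced `(JK) × L` covariate matrix `Z°` with rows `z_{jk}ᵀ`, `j,k ≥ 1`. -/
def Zred {J K : ℕ} {L : Type*} (Z : Matrix (Cell J K) L ℝ) : Matrix (Fin J × Fin K) L ℝ :=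
  fun jk => Z (jk.1.succ, jk.2.succ)

/-- The model space `ℋ = 𝒯 + col(Z)` of the log-linear model
`η_{jk} = α + ρ_j + γ_k + z_{jk}ᵀ θ`. -/
def modelSpace {J K : ℕ} {L : Type*} [Fintype L] (Z : Matrix (Cell J K) L ℝ) :
    Submodule ℝ (Cell J K → ℝ) :=
  margSpace J K ⊔ colSpan Z

end

/-
Everything happens on `𝒯^{⊥_D}`: the columns of `D⁻¹C` lie there, because `Cᵀ` annihilates
exactly `𝒯` (a table is row effect plus column effect iff all its interaction contrasts vanish).
The columns of `V` differ from those of `Z` by elements of `𝒯`, so `ℋ = 𝒯 ⊕ col(V)` with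
`col(V)` `D`-orthogonal to `𝒯`; hence on `𝒯^{⊥_D}` the projection `P^D_ℋ` is the projection
`V(VᵀDV)⁻¹VᵀD` onto `col(V)`. For the same reason `VᵀC = ZᵀC = Z°ᵀ`, which cancels `Z°⁻ᵀ` and,
as `Z°` has full column rank, makes `V` injective and `VᵀDV` invertible.
-/

section MatrixFacts

variable {m n : Type*} [Fintype n]

theorem dotProduct_mulVec_mulVec_eq [Fintype m] {D : Matrix m m ℝ} (hD : Dᵀ = D) (V : Matrix m n ℝ)
    (y : m → ℝ) (b : n → ℝ) : y ⬝ᵥ D *ᵥ (V *ᵥ b) = ((Vᵀ * D) *ᵥ y) ⬝ᵥ b := by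
  rw [mulVec_mulVec, dotProduct_mulVec, ← mulVec_transpose, transpose_mul, hD]

theorem colSpan_eq_range (A : Matrix m n ℝ) : colSpan A = LinearMap.range A.mulVecLin :=
  (range_mulVecLin A).symm

theorem mulVec_mem_colSpan (A : Matrix m n ℝ) (b : n → ℝ) : A *ᵥ b ∈ colSpan A := by
  rw [colSpan_eq_range]
  exact ⟨b, rfl⟩

theorem sup_colSpan_le_of_sub_mem {T : Submodule ℝ (m → ℝ)} {A B : Matrix m n ℝ}
    (h : ∀ b, A *ᵥ b - B *ᵥ b ∈ T) : T ⊔ colSpan A ≤ T ⊔ colSpan B := by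
  refine sup_le le_sup_left ?_
  rw [colSpan_eq_range A]
  rintro _ ⟨b, rfl⟩
  rw [mulVecLin_apply, ← sub_add_cancel (A *ᵥ b) (B *ᵥ b)]
  exact add_mem (Submodule.mem_sup_left (h b))
    (Submodule.mem_sup_right (mulVec_mem_colSpan B b))

theorem sup_colSpan_eq_of_sub_mem {T : Submodule ℝ (m → ℝ)} {A B : Matrix m n ℝ}
    (h : ∀ b, A *ᵥ b - B *ᵥ b ∈ T) : T ⊔ colSpan A = T ⊔ colSpan B :=
  le_antisymm (sup_colSpan_le_of_sub_mem h)
    (sup_colSpan_le_of_sub_mem fun b => by simpa using T.neg_mem (h b))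

theorem mulVec_injective_of_transpose_mul_eq_transpose [Fintype m] {k : Type*} [Fintype k]
    {A : Matrix m n ℝ} {C : Matrix m k ℝ} {G : Matrix k n ℝ} (h : Aᵀ * C = Gᵀ)
    (hG : Function.Injective G.mulVec) : Function.Injective A.mulVec := by
  have hCA : Cᵀ * A = G := by
    rw [← transpose_transpose G, ← h, transpose_mul, transpose_transpose]
  exact Function.Injective.of_comp (f := Cᵀ.mulVec)
    (by simpa only [Function.comp_def, mulVec_mulVec, hCA] using hG)

theorem isUnit_transpose_mul_mul_of_posDef [Fintype m] [DecidableEq n] {D : Matrix m m ℝ}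
    (hD : D.PosDef) {A : Matrix m n ℝ} (hA : Function.Injective A.mulVec) :
    IsUnit (Aᵀ * D * A) := by
  simpa only [conjTranspose_eq_transpose_of_trivial] using
    (hD.conjTranspose_mul_mul_same hA).isUnit

theorem transpose_mul_pinv_transpose_eq_one [Fintype m] [DecidableEq m] [DecidableEq n]
    {A : Matrix m n ℝ} (hA : Function.Injective A.mulVec) :
    Aᵀ * ((Aᵀ * A)⁻¹ * Aᵀ)ᵀ = 1 := by
  have hG := isUnit_transpose_mul_mul_of_posDef PosDef.one hA
  rw [Matrix.mul_one] at hG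
  rw [← transpose_mul, Matrix.mul_assoc, nonsing_inv_mul _ ((isUnit_iff_isUnit_det _).mp hG),
    transpose_one]

theorem mulVec_injective_of_rank_eq {A : Matrix m n ℝ} (h : A.rank = Fintype.card n) :
    Function.Injective A.mulVec :=
  mulVec_injective_iff.mpr <| linearIndependent_iff_card_eq_finrank_span.mpr <| by
    rw [← h, rank_eq_finrank_span_cols]
    rfl

end MatrixFacts

section DProjection

variable {J K : ℕ} {D P : Matrix (Cell J K) (Cell J K) ℝ}

theorem IsProjD.mulVec_eq_of_orthogonal {S : Submodule ℝ (Cell J K → ℝ)} (hD : D.PosDef)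
    (hP : IsProjD D S P) {x p : Cell J K → ℝ} (hp : p ∈ S)
    (horth : ∀ s ∈ S, (x - p) ⬝ᵥ D *ᵥ s = 0) : P *ᵥ x = p := by
  have hd : P *ᵥ x - p ∈ S := S.sub_mem (hP x).1 hp
  have hself : (P *ᵥ x - p) ⬝ᵥ D *ᵥ (P *ᵥ x - p) = 0 :=
    calc (P *ᵥ x - p) ⬝ᵥ D *ᵥ (P *ᵥ x - p)
        = ((x - p) - (x - P *ᵥ x)) ⬝ᵥ D *ᵥ (P *ᵥ x - p) := by congr 1; abel
      _ = 0 := by rw [sub_dotProduct, horth _ hd, (hP x).2 _ hd, sub_zero]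
  by_contra hne
  exact (hD.dotProduct_mulVec_pos (sub_ne_zero.mpr hne)).ne' (by simpa using hself)

theorem IsProjD.mulVec_eq_of_mem_perpD {ι : Type*} [Fintype ι] [DecidableEq ι]
    {T : Submodule ℝ (Cell J K → ℝ)} {V : Matrix (Cell J K) ι ℝ} (hD : D.PosDef)
    (hP : IsProjD D (T ⊔ colSpan V) P) (hV : ∀ b, V *ᵥ b ∈ perpD D T)
    (hM : IsUnit (Vᵀ * D * V)) {x : Cell J K → ℝ} (hx : x ∈ perpD D T) :
    P *ᵥ x = (V * (Vᵀ * D * V)⁻¹ * Vᵀ * D) *ᵥ x := by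
  set a := (Vᵀ * D * V)⁻¹ *ᵥ ((Vᵀ * D) *ᵥ x)
  have hMa : (Vᵀ * D * V) *ᵥ a = (Vᵀ * D) *ᵥ x := by
    rw [mulVec_mulVec, mul_nonsing_inv _ ((isUnit_iff_isUnit_det _).mp hM), one_mulVec]
  rw [show (V * (Vᵀ * D * V)⁻¹ * Vᵀ * D) *ᵥ x = V *ᵥ a by
    simp only [a, mulVec_mulVec, Matrix.mul_assoc]]
  refine hP.mulVec_eq_of_orthogonal hD (Submodule.mem_sup_right (mulVec_mem_colSpan V a)) ?_
  intro s hs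
  obtain ⟨t, ht, _, hu, rfl⟩ := Submodule.mem_sup.mp hs
  obtain ⟨b, rfl⟩ := (colSpan_eq_range V ▸ hu : _ ∈ LinearMap.range V.mulVecLin)
  rw [mulVec_add, dotProduct_add, sub_dotProduct, hx t ht, hV a t ht, sub_zero, zero_add,
    mulVecLin_apply, dotProduct_mulVec_mulVec_eq (isHermitian_iff_isSymm.mp hD.1).eq,
    mulVec_sub, mulVec_mulVec, hMa, sub_self, zero_dotProduct]

theorem inv_mulVec_mem_perpD {S : Submodule ℝ (Cell J K → ℝ)} (hD : D.PosDef)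
    {c : Cell J K → ℝ} (hc : ∀ t ∈ S, t ⬝ᵥ c = 0) : D⁻¹ *ᵥ c ∈ perpD D S := by
  intro t ht
  rw [dotProduct_mulVec, ← mulVec_transpose, (isHermitian_iff_isSymm.mp hD.1).eq, mulVec_mulVec,
    mul_nonsing_inv _ ((isUnit_iff_isUnit_det _).mp hD.isUnit), one_mulVec, dotProduct_comm]
  exact hc t ht

end DProjection

section MarginalSpace

variable {J K : ℕ}

theorem eRow_apply (j a : Fin (J + 1)) (b : Fin (K + 1)) :
    eRow (K := K) j (a, b) = if a = j then 1 else 0 := by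
  by_cases h : a = j <;> simp [eRow, eV, Pi.single_apply, h]

theorem eCol_apply (k : Fin (K + 1)) (a : Fin (J + 1)) (b : Fin (K + 1)) :
    eCol (J := J) k (a, b) = if b = k then 1 else 0 := by
  by_cases h : b = k <;> simp [eCol, eV, Pi.single_apply, h]

theorem vecMul_Cmat_apply (y : Cell J K → ℝ) (jk : Fin J × Fin K) :
    (y ᵥ* Cmat J K) jk =
      y (jk.1.succ, jk.2.succ) + y (0, 0) - y (jk.1.succ, 0) - y (0, jk.2.succ) := by
  change y ⬝ᵥ cVec jk.1 jk.2 = _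
  simp only [cVec, eV, dotProduct_add, dotProduct_sub, dotProduct_single, mul_one]

theorem margSpace_le_ker_vecMul_Cmat :
    margSpace J K ≤ LinearMap.ker (vecMulLinear (Cmat J K)) := by
  refine sup_le (Submodule.span_le.mpr ?_) (Submodule.span_le.mpr ?_) <;>
    rintro _ ⟨i, rfl⟩ <;> ext jk <;>
    simp only [vecMulLinear_apply, vecMul_Cmat_apply,
      eRow_apply, eCol_apply, Pi.zero_apply] <;> ring

theorem border_mem_margSpace (y : Cell J K → ℝ) :
    (fun p : Cell J K => y (p.1, 0) + y (0, p.2) - y (0, 0)) ∈ margSpace J K := by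
  have hsplit : (fun p : Cell J K => y (p.1, 0) + y (0, p.2) - y (0, 0)) =
      (∑ j, (y (j, 0) - y (0, 0)) • eRow j) + ∑ k, y (0, k) • eCol k := by
    ext ⟨a, b⟩
    simp only [Pi.add_apply, Finset.sum_apply, Pi.smul_apply, eRow_apply, eCol_apply, smul_eq_mul,
      mul_ite, mul_one, mul_zero, Finset.sum_ite_eq, Finset.mem_univ, ↓reduceIte]
    ring
  rw [hsplit]
  exact add_mem
    (Submodule.mem_sup_left (Submodule.sum_mem _ fun j _ =>
      Submodule.smul_mem _ _ (Submodule.subset_span ⟨j, rfl⟩)))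
    (Submodule.mem_sup_right (Submodule.sum_mem _ fun k _ =>
      Submodule.smul_mem _ _ (Submodule.subset_span ⟨k, rfl⟩)))

theorem eq_border_of_vecMul_Cmat_eq_zero {y : Cell J K → ℝ} (h : y ᵥ* Cmat J K = 0) :
    y = fun p => y (p.1, 0) + y (0, p.2) - y (0, 0) := by
  ext ⟨a, b⟩
  cases a using Fin.cases with
  | zero => simp
  | succ j =>
    cases b using Fin.cases with
    | zero => simp
    | succ k =>
      have hjk := congrFun h (j, k)
      rw [vecMul_Cmat_apply] at hjk
      simp only [Pi.zero_apply] at hjk ⊢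
      linarith

theorem mem_margSpace_iff_vecMul_Cmat_eq_zero {y : Cell J K → ℝ} :
    y ∈ margSpace J K ↔ y ᵥ* Cmat J K = 0 :=
  ⟨fun hy => margSpace_le_ker_vecMul_Cmat hy,
    fun hy => eq_border_of_vecMul_Cmat_eq_zero hy ▸ border_mem_margSpace y⟩


theorem transpose_mul_Cmat_eq_of_sub_mem {ι : Type*} [Fintype ι] {A B : Matrix (Cell J K) ι ℝ}
    (h : ∀ b, A *ᵥ b - B *ᵥ b ∈ margSpace J K) : Aᵀ * Cmat J K = Bᵀ * Cmat J K := by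
  rw [← transpose_inj, transpose_mul, transpose_mul, transpose_transpose, ext_iff_mulVec]
  intro b
  rw [← mulVec_mulVec, ← mulVec_mulVec, mulVec_transpose, mulVec_transpose, ← sub_eq_zero,
    ← sub_vecMul]
  exact mem_margSpace_iff_vecMul_Cmat_eq_zero.mp (h b)

theorem transpose_mul_Cmat_of_border {ι : Type*} {Z : Matrix (Cell J K) ι ℝ}
    (hZrow : ∀ j, Z (j, 0) = 0) (hZcol : ∀ k, Z (0, k) = 0) :
    Zᵀ * Cmat J K = (Zred Z)ᵀ := by
  ext l jk
  have hl := vecMul_Cmat_apply (fun i => Z i l) jk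
  simp only [hZrow, hZcol, Pi.zero_apply, add_zero, sub_zero] at hl
  exact hl

variable {D P : Matrix (Cell J K) (Cell J K) ℝ}

theorem inv_mul_Cmat_mulVec_mem_perpD (hD : D.PosDef) (b : Fin J × Fin K → ℝ) :
    (D⁻¹ * Cmat J K) *ᵥ b ∈ perpD D (margSpace J K) := by
  rw [← mulVec_mulVec]
  refine inv_mulVec_mem_perpD hD fun t ht => ?_
  rw [dotProduct_mulVec, mem_margSpace_iff_vecMul_Cmat_eq_zero.mp ht, zero_dotProduct]

theorem mem_margSpace_of_orthogonal_perpD (hD : D.PosDef) {y : Cell J K → ℝ}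
    (h : ∀ w ∈ perpD D (margSpace J K), y ⬝ᵥ D *ᵥ w = 0) : y ∈ margSpace J K := by
  refine mem_margSpace_iff_vecMul_Cmat_eq_zero.mpr (dotProduct_eq_iff.mp fun b => ?_)
  have hw := h _ (inv_mul_Cmat_mulVec_mem_perpD hD b)
  rwa [mulVec_mulVec, ← Matrix.mul_assoc,
    mul_nonsing_inv _ ((isUnit_iff_isUnit_det _).mp hD.isUnit), Matrix.one_mul,
    dotProduct_mulVec, ← zero_dotProduct b] at hw

theorem IsProjD.sub_mul_mulVec_mem_margSpace {ι : Type*} [Fintype ι] (hD : D.PosDef)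
    (hP : IsProjD D (perpD D (margSpace J K)) P) (Z : Matrix (Cell J K) ι ℝ) (b : ι → ℝ) :
    Z *ᵥ b - (P * Z) *ᵥ b ∈ margSpace J K := by
  rw [← mulVec_mulVec]
  exact mem_margSpace_of_orthogonal_perpD hD (hP _).2

end MarginalSpace

theorem gamma_theta_block_representation_general
    {J K L : ℕ}
    (μ : Cell J K → ℝ) (hμ : ∀ i, 0 < μ i)
    (Z : Matrix (Cell J K) (Fin L) ℝ)
    (hZrow : ∀ j, Z (j, 0) = 0) (hZcol : ∀ k, Z (0, k) = 0)
    (hZrank : (Zred Z).rank = L)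
    (PH : Matrix (Cell J K) (Cell J K) ℝ)
    (hPH : IsProjD (Matrix.diagonal μ) (modelSpace Z) PH)
    (PTperp : Matrix (Cell J K) (Cell J K) ℝ)
    (hPTperp : IsProjD (Matrix.diagonal μ) (perpD (Matrix.diagonal μ) (margSpace J K)) PTperp)
    (V : Matrix (Cell J K) (Fin L) ℝ) (hV : V = PTperp * Z) :
    IsUnit (Vᵀ * Matrix.diagonal μ * V) ∧
    (Bmat J K)ᵀ * PH * (Matrix.diagonal μ)⁻¹ * Cmat J K *
        (((Zred Z)ᵀ * Zred Z)⁻¹ * (Zred Z)ᵀ)ᵀ =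
      (Bmat J K)ᵀ * V * (Vᵀ * Matrix.diagonal μ * V)⁻¹ := by
  set D := diagonal μ
  have hD : D.PosDef := posDef_diagonal_iff.mpr hμ
  have hres : ∀ b, Z *ᵥ b - V *ᵥ b ∈ margSpace J K :=
    hV ▸ hPTperp.sub_mul_mulVec_mem_margSpace hD Z
  have hVperp (b : Fin L → ℝ) : V *ᵥ b ∈ perpD D (margSpace J K) := by
    rw [hV, ← mulVec_mulVec]
    exact (hPTperp _).1
  have hVC : Vᵀ * Cmat J K = (Zred Z)ᵀ := by
    rw [← transpose_mul_Cmat_eq_of_sub_mem hres, transpose_mul_Cmat_of_border hZrow hZcol]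
  have hZred : Function.Injective (Zred Z).mulVec :=
    mulVec_injective_of_rank_eq (by rwa [Fintype.card_fin])
  have hM : IsUnit (Vᵀ * D * V) := isUnit_transpose_mul_mul_of_posDef hD
    (mulVec_injective_of_transpose_mul_eq_transpose hVC hZred)
  refine ⟨hM, ?_⟩
  rw [modelSpace, sup_colSpan_eq_of_sub_mem hres] at hPH
  have hPHC : PH * (D⁻¹ * Cmat J K) = V * (Vᵀ * D * V)⁻¹ * Vᵀ * D * (D⁻¹ * Cmat J K) :=
    ext_iff_mulVec.mpr fun b => by
      simpa only [mulVec_mulVec] using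
        hPH.mulVec_eq_of_mem_perpD hD hVperp hM (inv_mul_Cmat_mulVec_mem_perpD hD b)
  set W := ((Zred Z)ᵀ * Zred Z)⁻¹ * (Zred Z)ᵀ with hW
  calc (Bmat J K)ᵀ * PH * D⁻¹ * Cmat J K * Wᵀ
      = (Bmat J K)ᵀ * (PH * (D⁻¹ * Cmat J K)) * Wᵀ := by simp only [Matrix.mul_assoc]
    _ = (Bmat J K)ᵀ * V * (Vᵀ * D * V)⁻¹ * (Vᵀ * Cmat J K * Wᵀ) := by
        rw [hPHC]
        simp only [Matrix.mul_assoc,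
          mul_nonsing_inv_cancel_left _ _ ((isUnit_iff_isUnit_det _).mp hD.isUnit)]
    _ = (Bmat J K)ᵀ * V * (Vᵀ * D * V)⁻¹ := by
        rw [hVC, hW, transpose_mul_pinv_transpose_eq_one hZred, Matrix.mul_one]

/-- with `V = P^D_{𝒯^{⊥_D}} Z`, the matrix `VᵀDV` is invertible and the
`γθ`-block of the asymptotic covariance matrix `Σ_λ̂` satisfies
`Bᵀ P^D_ℋ D⁻¹ C Z°⁻ᵀ = BᵀV(VᵀDV)⁻¹`. -/
theorem gamma_theta_block_representation
    {J K L : ℕ} (hJ : 1 ≤ J) (hK : 1 ≤ K) (hL : 1 ≤ L)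
    (μ : Cell J K → ℝ) (hμ : ∀ i, 0 < μ i)
    (Z : Matrix (Cell J K) (Fin L) ℝ)
    (hZrow : ∀ j, Z (j, 0) = 0) (hZcol : ∀ k, Z (0, k) = 0)
    (hZrank : (Zred Z).rank = L)
    (PH : Matrix (Cell J K) (Cell J K) ℝ)
    (hPH : IsProjD (Matrix.diagonal μ) (modelSpace Z) PH)
    (PTperp : Matrix (Cell J K) (Cell J K) ℝ)
    (hPTperp : IsProjD (Matrix.diagonal μ) (perpD (Matrix.diagonal μ) (margSpace J K)) PTperp)
    (V : Matrix (Cell J K) (Fin L) ℝ) (hV : V = PTperp * Z) :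
    IsUnit (Vᵀ * Matrix.diagonal μ * V) ∧
    (Bmat J K)ᵀ * PH * (Matrix.diagonal μ)⁻¹ * Cmat J K *
        (((Zred Z)ᵀ * Zred Z)⁻¹ * (Zred Z)ᵀ)ᵀ =
      (Bmat J K)ᵀ * V * (Vᵀ * Matrix.diagonal μ * V)⁻¹ :=
  gamma_theta_block_representation_general μ hμ Z hZrow hZcol hZrank PH hPH PTperp hPTperp V hV
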